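/- Let α > 0, σ ∈ ℝ \ {0}, γ ∈ ℝ, and set γ̃ = γ + α/4 and Φ_α(s) = ∫₀^s e^{αt²/4} dt. Assume 0 < γ̃ ≤ 1. Then there exists a universal constant C > 0 (independent of α, σ, γ, x) such that for all x ≥ 1: |∫_x^∞ e^{iσΦ_α(s) − γs²} ds| ≤ C e^{−γ̃x²}/|σ|, |∫_x^∞ s e^{iσΦ_α(s) − γs²} ds| ≤ C x e^{−γ̃x²}/(|σ| γ̃), and |∫_x^∞ s² e^{iσΦ_α(s) − γs²} ds| ≤ C x² e^{−γ̃x²}/(|σ| γ̃); in particular these improper integrals converge. -/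

import Mathlib

/-!
Since `Φ_α' = e^{α s²/4}`, the integrand `s^j e^{iσΦ_α(s) - γ s²}` is `Φ_α'(s) g(s) e^{iσΦ_α(s)}`
with `g(s) = s^j e^{-γ̃ s²}`, and `Φ_α' e^{iσΦ_α} = (e^{iσΦ_α})' / (iσ)`. One integration by parts
bounds the tail integral by `(|g(x)| + ∫_x^∞ |g'|) / |σ|`. Because `g'` is the difference of the two
nonnegative terms `j s^{j-1} e^{-γ̃ s²}` and `2γ̃ s^{j+1} e^{-γ̃ s²}`, the variation `∫_x^∞ |g'|` is at
most `g(x) + 2j ∫_x^∞ s^{j-1} e^{-γ̃ s²}`; for `j ≤ 2` and `x ≥ 1` the last term is at most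
`2 x^j e^{-γ̃ x²} / γ̃`, which only costs a factor `1/γ̃ ≥ 1` against `g(x)`.
-/

noncomputable section

open Real MeasureTheory Filter

/-- `Φ_α(x) = ∫₀ˣ e^{α s²/4} ds`. -/
def Phi (α x : ℝ) : ℝ := ∫ s in (0 : ℝ)..x, Real.exp (α * s ^ 2 / 4)

open Set Topology

def expIPhase (σ : ℝ) (φ : ℝ → ℝ) (s : ℝ) : ℂ := Complex.exp (Complex.I * ((σ * φ s : ℝ) : ℂ))

section IntegrationByParts

variable {σ : ℝ} {φ φ' g g' : ℝ → ℝ}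

theorem norm_expIPhase (σ : ℝ) (φ : ℝ → ℝ) (s : ℝ) : ‖expIPhase σ φ s‖ = 1 := by
  simp [expIPhase, Complex.norm_exp]

theorem norm_expIPhase_mul_ofReal (σ : ℝ) (φ : ℝ → ℝ) (s c : ℝ) :
    ‖expIPhase σ φ s * c‖ = |c| := by
  rw [norm_mul, norm_expIPhase, one_mul, Complex.norm_real, norm_eq_abs]

theorem hasDerivAt_expIPhase {s : ℝ} (hφ : HasDerivAt φ (φ' s) s) :
    HasDerivAt (expIPhase σ φ) (expIPhase σ φ s * (Complex.I * σ) * φ' s) s := by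
  have h := ((hφ.const_mul σ).ofReal_comp.const_mul Complex.I).cexp
  refine h.congr_deriv ?_
  simp only [expIPhase]
  push_cast
  ring

theorem continuous_expIPhase (σ : ℝ) (hφ : Continuous φ) : Continuous (expIPhase σ φ) := by
  unfold expIPhase
  fun_prop

theorem intervalIntegral_mul_expIPhase_eq (hσ : σ ≠ 0) (hφ : ∀ s, HasDerivAt φ (φ' s) s)
    (hφ' : Continuous φ') (hg : ∀ s, HasDerivAt g (g' s) s) (hg' : Continuous g') (x y : ℝ) :
    ∫ s in x..y, ((φ' s * g s : ℝ) : ℂ) * expIPhase σ φ s =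
      (expIPhase σ φ y * g y - expIPhase σ φ x * g x -
        ∫ s in x..y, expIPhase σ φ s * g' s) / (Complex.I * σ) := by
  have hIσ : Complex.I * σ ≠ 0 := by simp [hσ]
  have hE := continuous_expIPhase σ (continuous_iff_continuousAt.2 fun s => (hφ s).continuousAt)
  have hgc : Continuous g := continuous_iff_continuousAt.2 fun s => (hg s).continuousAt
  have hprod (s : ℝ) := (hasDerivAt_expIPhase (σ := σ) (hφ s)).mul (hg s).ofReal_comp
  have hftc := intervalIntegral.integral_eq_sub_of_hasDerivAt (fun s _ => hprod s)
    ((by fun_prop : Continuous _).intervalIntegrable x y)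
  rw [intervalIntegral.integral_add ((by fun_prop : Continuous _).intervalIntegrable _ _)
    ((by fun_prop : Continuous _).intervalIntegrable _ _)] at hftc
  have hmain : ∫ s in x..y, expIPhase σ φ s * (Complex.I * σ) * (φ' s : ℂ) * (g s : ℂ) =
      Complex.I * σ * ∫ s in x..y, ((φ' s * g s : ℝ) : ℂ) * expIPhase σ φ s := by
    rw [← intervalIntegral.integral_const_mul]
    congr 1 with s
    push_cast
    ring
  rw [eq_div_iff hIσ]
  simp only [Pi.mul_apply] at hftc
  linear_combination hftc - hmain

theorem exists_tendsto_integral_mul_expIPhase (hσ : σ ≠ 0) (hφ : ∀ s, HasDerivAt φ (φ' s) s)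
    (hφ' : Continuous φ') (hg : ∀ s, HasDerivAt g (g' s) s) (hg' : Continuous g') {x : ℝ}
    (hg'i : IntegrableOn g' (Ioi x)) (hg0 : Tendsto g atTop (𝓝 0)) :
    ∃ L : ℂ, Tendsto (fun y => ∫ s in x..y, ((φ' s * g s : ℝ) : ℂ) * expIPhase σ φ s)
        atTop (𝓝 L) ∧
      ‖L‖ ≤ (|g x| + ∫ s in Ioi x, |g' s|) / |σ| := by
  have hE := continuous_expIPhase σ (continuous_iff_continuousAt.2 fun s => (hφ s).continuousAt)
  set J := ∫ s in Ioi x, expIPhase σ φ s * g' s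
  have hJi : IntegrableOn (fun s => expIPhase σ φ s * g' s) (Ioi x) :=
    hg'i.norm.mono' (by fun_prop : Continuous _).aestronglyMeasurable
      (Eventually.of_forall fun s => (norm_expIPhase_mul_ofReal σ φ s (g' s)).le)
  have hJ : Tendsto (fun y => ∫ s in x..y, expIPhase σ φ s * g' s) atTop (𝓝 J) :=
    intervalIntegral_tendsto_integral_Ioi x hJi tendsto_id
  have hboundary : Tendsto (fun y => expIPhase σ φ y * g y) atTop (𝓝 0) :=
    squeeze_zero_norm (fun y => (norm_expIPhase_mul_ofReal σ φ y (g y)).le)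
      (by simpa using hg0.abs)
  have hJle : ‖J‖ ≤ ∫ s in Ioi x, |g' s| :=
    (norm_integral_le_integral_norm _).trans_eq
      (integral_congr_ae (Eventually.of_forall fun s => norm_expIPhase_mul_ofReal σ φ s (g' s)))
  refine ⟨(0 - expIPhase σ φ x * g x - J) / (Complex.I * σ), ?_, ?_⟩
  · simp_rw [intervalIntegral_mul_expIPhase_eq hσ hφ hφ' hg hg' x]
    exact ((hboundary.sub_const _).sub hJ).div_const _
  · rw [norm_div, zero_sub, sub_eq_add_neg, ← neg_add, norm_neg]
    simp only [norm_mul, Complex.norm_I, one_mul, Complex.norm_real, norm_eq_abs]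
    gcongr
    exact (norm_add_le _ _).trans (by rw [norm_expIPhase_mul_ofReal]; gcongr)

end IntegrationByParts

section GaussianMoments

variable {b : ℝ}

theorem tendsto_pow_mul_exp_neg_mul_sq (hb : 0 < b) (n : ℕ) :
    Tendsto (fun s : ℝ => s ^ n * exp (-b * s ^ 2)) atTop (𝓝 0) := by
  have h := (rpow_mul_exp_neg_mul_sq_isLittleO_exp_neg hb n).tendsto_zero_of_tendsto
    (tendsto_exp_atBot.comp (tendsto_id.const_mul_atTop_of_neg (by norm_num)))
  simpa only [rpow_natCast] using h

theorem integrableOn_Ioi_pow_mul_exp_neg_mul_sq (hb : 0 < b) (n : ℕ) {x : ℝ} (hx : 0 ≤ x) :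
    IntegrableOn (fun s : ℝ => s ^ n * exp (-b * s ^ 2)) (Ioi x) := by
  have h := integrableOn_rpow_mul_exp_neg_mul_sq hb (s := n)
    (neg_one_lt_zero.trans_le n.cast_nonneg)
  simp only [rpow_natCast] at h
  exact h.mono_set (Ioi_subset_Ioi hx)

theorem hasDerivAt_pow_mul_exp_neg_mul_sq (b : ℝ) (n : ℕ) (s : ℝ) :
    HasDerivAt (fun t : ℝ => t ^ n * exp (-b * t ^ 2))
      ((n * s ^ (n - 1) - 2 * b * s ^ (n + 1)) * exp (-b * s ^ 2)) s := by
  have hexp := ((hasDerivAt_pow 2 s).const_mul (-b)).exp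
  refine ((hasDerivAt_pow n s).fun_mul hexp).congr_deriv ?_
  norm_num
  ring

theorem integral_Ioi_mul_exp_neg_mul_sq (hb : 0 < b) (x : ℝ) :
    ∫ s in Ioi x, s * exp (-b * s ^ 2) = exp (-b * x ^ 2) / (2 * b) := by
  have hderiv (s : ℝ) : HasDerivAt (fun t => -exp (-b * t ^ 2) / (2 * b))
      (s * exp (-b * s ^ 2)) s := by
    refine (((hasDerivAt_pow 2 s).const_mul (-b)).exp.fun_neg.div_const (2 * b)).congr_deriv ?_
    field_simp
    ring
  have hlim : Tendsto (fun t => -exp (-b * t ^ 2) / (2 * b)) atTop (𝓝 0) := by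
    simpa using ((tendsto_pow_mul_exp_neg_mul_sq hb 0).neg).div_const (2 * b)
  rw [integral_Ioi_of_hasDerivAt_of_tendsto (hderiv x).continuousAt.continuousWithinAt
    (fun s _ => hderiv s) (integrable_mul_exp_neg_mul_sq hb).integrableOn hlim]
  ring

theorem integral_Ioi_exp_neg_mul_sq_le (hb : 0 < b) {x : ℝ} (hx : 1 ≤ x) :
    ∫ s in Ioi x, exp (-b * s ^ 2) ≤ exp (-b * x ^ 2) / (2 * b) := by
  rw [← integral_Ioi_mul_exp_neg_mul_sq hb x]
  refine setIntegral_mono_on (integrable_exp_neg_mul_sq hb).integrableOn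
    (integrable_mul_exp_neg_mul_sq hb).integrableOn measurableSet_Ioi fun s hs => ?_
  exact le_mul_of_one_le_left (exp_pos _).le (hx.trans (le_of_lt hs))

theorem integrableOn_Ioi_deriv_pow_mul_exp_neg_mul_sq (hb : 0 < b) (n : ℕ) {x : ℝ}
    (hx : 0 ≤ x) :
    IntegrableOn (fun s : ℝ => (n * s ^ (n - 1) - 2 * b * s ^ (n + 1)) * exp (-b * s ^ 2))
      (Ioi x) := by
  refine IntegrableOn.congr_fun
    (((integrableOn_Ioi_pow_mul_exp_neg_mul_sq hb (n - 1) hx).const_mul n).sub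
      ((integrableOn_Ioi_pow_mul_exp_neg_mul_sq hb (n + 1) hx).const_mul (2 * b)))
    (fun s _ => ?_) measurableSet_Ioi
  simp only [Pi.sub_apply]
  ring

theorem integral_Ioi_abs_deriv_pow_mul_exp_neg_mul_sq_le (hb : 0 < b) (n : ℕ) {x : ℝ}
    (hx : 0 ≤ x) :
    ∫ s in Ioi x, |(n * s ^ (n - 1) - 2 * b * s ^ (n + 1)) * exp (-b * s ^ 2)| ≤
      x ^ n * exp (-b * x ^ 2) + 2 * n * ∫ s in Ioi x, s ^ (n - 1) * exp (-b * s ^ 2) := by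
  set g' := fun s : ℝ => (n * s ^ (n - 1) - 2 * b * s ^ (n + 1)) * exp (-b * s ^ 2)
  have hint := integrableOn_Ioi_pow_mul_exp_neg_mul_sq hb (n - 1) hx
  have hg'i : IntegrableOn g' (Ioi x) := integrableOn_Ioi_deriv_pow_mul_exp_neg_mul_sq hb n hx
  have hftc : ∫ s in Ioi x, g' s = 0 - x ^ n * exp (-b * x ^ 2) :=
    integral_Ioi_of_hasDerivAt_of_tendsto
      (hasDerivAt_pow_mul_exp_neg_mul_sq b n x).continuousAt.continuousWithinAt
      (fun s _ => hasDerivAt_pow_mul_exp_neg_mul_sq b n s) hg'i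
      (tendsto_pow_mul_exp_neg_mul_sq hb n)
  -- `|a - c| ≤ -(a - c) + 2a` for `a, c ≥ 0`
  have hmajor : ∀ s ∈ Ioi x, |g' s| ≤ -g' s + 2 * n * (s ^ (n - 1) * exp (-b * s ^ 2)) := by
    intro s hs
    have hs0 : 0 ≤ s := hx.trans (le_of_lt hs)
    have ha : 0 ≤ n * s ^ (n - 1) * exp (-b * s ^ 2) := by positivity
    have hc : 0 ≤ 2 * b * s ^ (n + 1) * exp (-b * s ^ 2) := by positivity
    simp only [g']
    rw [abs_le]
    constructor <;> nlinarith
  calc ∫ s in Ioi x, |g' s|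
      ≤ ∫ s in Ioi x, (-g' s + 2 * n * (s ^ (n - 1) * exp (-b * s ^ 2))) :=
        setIntegral_mono_on hg'i.abs (hg'i.neg.add (hint.const_mul _))
          measurableSet_Ioi hmajor
    _ = x ^ n * exp (-b * x ^ 2) + 2 * n * ∫ s in Ioi x, s ^ (n - 1) * exp (-b * s ^ 2) := by
        rw [integral_add (f := fun s => -g' s) hg'i.neg (hint.const_mul _),
          integral_neg, hftc, integral_const_mul]
        ring

theorem two_mul_integral_Ioi_pow_pred_mul_exp_neg_mul_sq_le (hb : 0 < b) {j : ℕ}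
    (hj : j ≤ 2) {x : ℝ} (hx : 1 ≤ x) :
    2 * j * ∫ s in Ioi x, s ^ (j - 1) * exp (-b * s ^ 2) ≤ 2 * x ^ j * exp (-b * x ^ 2) / b := by
  interval_cases j
  · simp only [CharP.cast_eq_zero, mul_zero, zero_mul]
    positivity
  · have h := integral_Ioi_exp_neg_mul_sq_le hb hx
    simp only [Nat.cast_one, mul_one, tsub_self, pow_zero, one_mul, pow_one] at h ⊢
    calc 2 * ∫ s in Ioi x, exp (-b * s ^ 2) ≤ 2 * (exp (-b * x ^ 2) / (2 * b)) := by gcongr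
      _ = exp (-b * x ^ 2) / b := by field_simp
      _ ≤ 2 * x * exp (-b * x ^ 2) / b := by gcongr; nlinarith [exp_pos (-b * x ^ 2)]
  · simp only [Nat.cast_ofNat, Nat.add_one_sub_one, pow_one, integral_Ioi_mul_exp_neg_mul_sq hb]
    calc 2 * 2 * (exp (-b * x ^ 2) / (2 * b)) = 2 * 1 * exp (-b * x ^ 2) / b := by field_simp
      _ ≤ 2 * x ^ 2 * exp (-b * x ^ 2) / b := by gcongr; exact one_le_pow₀ hx

end GaussianMoments

section Phi

theorem hasDerivAt_Phi (α x : ℝ) : HasDerivAt (Phi α) (exp (α * x ^ 2 / 4)) x := by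
  have hc : Continuous fun s : ℝ => exp (α * s ^ 2 / 4) := by fun_prop
  exact intervalIntegral.integral_hasDerivAt_right (hc.intervalIntegrable _ _)
    hc.aestronglyMeasurable.stronglyMeasurableAtFilter hc.continuousAt

theorem ofReal_pow_mul_cexp_eq (α σ γ : ℝ) (j : ℕ) (s : ℝ) :
    (s : ℂ) ^ j * Complex.exp (Complex.I * ((σ * Phi α s : ℝ) : ℂ) - ((γ * s ^ 2 : ℝ) : ℂ)) =
      ((exp (α * s ^ 2 / 4) * (s ^ j * exp (-(γ + α / 4) * s ^ 2)) : ℝ) : ℂ) *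
        expIPhase σ (Phi α) s := by
  have hreal : exp (α * s ^ 2 / 4) * (s ^ j * exp (-(γ + α / 4) * s ^ 2)) =
      s ^ j * exp (-(γ * s ^ 2)) := by
    rw [mul_left_comm, ← exp_add]
    ring_nf
  rw [hreal, expIPhase, sub_eq_add_neg, Complex.exp_add]
  push_cast
  ring

variable {α σ γ : ℝ}

theorem exists_tendsto_integral_pow_mul_cexp_Phi (hσ : σ ≠ 0) (hb : 0 < γ + α / 4) (j : ℕ)
    {x : ℝ} (hx : 0 ≤ x) :
    ∃ L : ℂ, Tendsto (fun y => ∫ s in x..y, (s : ℂ) ^ j *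
        Complex.exp (Complex.I * ((σ * Phi α s : ℝ) : ℂ) - ((γ * s ^ 2 : ℝ) : ℂ))) atTop (𝓝 L) ∧
      ‖L‖ ≤ (2 * (x ^ j * exp (-(γ + α / 4) * x ^ 2)) +
        2 * j * ∫ s in Ioi x, s ^ (j - 1) * exp (-(γ + α / 4) * s ^ 2)) / |σ| := by
  set b := γ + α / 4
  obtain ⟨L, hL, hLb⟩ := exists_tendsto_integral_mul_expIPhase hσ (hasDerivAt_Phi α)
    (by fun_prop) (hasDerivAt_pow_mul_exp_neg_mul_sq b j) (by fun_prop)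
    (integrableOn_Ioi_deriv_pow_mul_exp_neg_mul_sq hb j hx) (tendsto_pow_mul_exp_neg_mul_sq hb j)
  refine ⟨L, by simpa only [ofReal_pow_mul_cexp_eq] using hL, hLb.trans ?_⟩
  rw [abs_of_nonneg (by positivity)]
  refine div_le_div_of_nonneg_right ?_ (abs_nonneg σ)
  linarith [integral_Ioi_abs_deriv_pow_mul_exp_neg_mul_sq_le hb j hx]

theorem exists_tendsto_integral_pow_mul_cexp_Phi_le (hσ : σ ≠ 0) (hb : 0 < γ + α / 4)
    (hb1 : γ + α / 4 ≤ 1) {j : ℕ} (hj : j ≤ 2) {x : ℝ} (hx : 1 ≤ x) :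
    ∃ L : ℂ, Tendsto (fun y => ∫ s in x..y, (s : ℂ) ^ j *
        Complex.exp (Complex.I * ((σ * Phi α s : ℝ) : ℂ) - ((γ * s ^ 2 : ℝ) : ℂ))) atTop (𝓝 L) ∧
      ‖L‖ ≤ 4 * x ^ j * exp (-(γ + α / 4) * x ^ 2) / (|σ| * (γ + α / 4)) := by
  set b := γ + α / 4
  obtain ⟨L, hL, hLb⟩ := exists_tendsto_integral_pow_mul_cexp_Phi hσ hb j (zero_le_one.trans hx)
  refine ⟨L, hL, hLb.trans ?_⟩
  have hmain : 0 ≤ x ^ j * exp (-b * x ^ 2) := by positivity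
  have htail := two_mul_integral_Ioi_pow_pred_mul_exp_neg_mul_sq_le hb hj hx
  have hdiv : x ^ j * exp (-b * x ^ 2) ≤ x ^ j * exp (-b * x ^ 2) / b := le_div_self hmain hb hb1
  rw [mul_comm |σ|, ← div_div]
  refine div_le_div_of_nonneg_right ?_ (abs_nonneg σ)
  calc 2 * (x ^ j * exp (-b * x ^ 2)) + 2 * j * ∫ s in Ioi x, s ^ (j - 1) * exp (-b * s ^ 2)
      ≤ 2 * (x ^ j * exp (-b * x ^ 2) / b) + 2 * x ^ j * exp (-b * x ^ 2) / b := by gcongr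
    _ = 4 * x ^ j * exp (-b * x ^ 2) / b := by ring

end Phi

theorem stmt18 :
    ∃ C : ℝ, 0 < C ∧
      ∀ α : ℝ, 0 < α → ∀ σ : ℝ, σ ≠ 0 → ∀ γ : ℝ,
        0 < γ + α / 4 → γ + α / 4 ≤ 1 → ∀ x : ℝ, 1 ≤ x →
          ∃ L₀ L₁ L₂ : ℂ,
            Tendsto (fun y : ℝ =>
                ∫ s in x..y,
                  Complex.exp (Complex.I * ((σ * Phi α s : ℝ) : ℂ) - ((γ * s ^ 2 : ℝ) : ℂ)))
              atTop (nhds L₀) ∧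
            Tendsto (fun y : ℝ =>
                ∫ s in x..y, (s : ℂ) *
                  Complex.exp (Complex.I * ((σ * Phi α s : ℝ) : ℂ) - ((γ * s ^ 2 : ℝ) : ℂ)))
              atTop (nhds L₁) ∧
            Tendsto (fun y : ℝ =>
                ∫ s in x..y, ((s : ℂ) ^ 2) *
                  Complex.exp (Complex.I * ((σ * Phi α s : ℝ) : ℂ) - ((γ * s ^ 2 : ℝ) : ℂ)))
              atTop (nhds L₂) ∧
            ‖L₀‖ ≤ C * Real.exp (-(γ + α / 4) * x ^ 2) / |σ| ∧
            ‖L₁‖ ≤ C * x * Real.exp (-(γ + α / 4) * x ^ 2) / (|σ| * (γ + α / 4)) ∧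
            ‖L₂‖ ≤ C * x ^ 2 * Real.exp (-(γ + α / 4) * x ^ 2) / (|σ| * (γ + α / 4)) := by
  refine ⟨4, by norm_num, fun α _ σ hσ γ hb hb1 x hx => ?_⟩
  obtain ⟨L₀, hL₀, hL₀le⟩ :=
    exists_tendsto_integral_pow_mul_cexp_Phi hσ hb 0 (zero_le_one.trans hx)
  obtain ⟨L₁, hL₁, hL₁le⟩ := exists_tendsto_integral_pow_mul_cexp_Phi_le hσ hb hb1 one_le_two hx
  obtain ⟨L₂, hL₂, hL₂le⟩ := exists_tendsto_integral_pow_mul_cexp_Phi_le hσ hb hb1 le_rfl hx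
  refine ⟨L₀, L₁, L₂, by simpa using hL₀, by simpa using hL₁, hL₂, hL₀le.trans ?_,
    by simpa using hL₁le, hL₂le⟩
  simp only [pow_zero, one_mul, CharP.cast_eq_zero, mul_zero, zero_mul, add_zero]
  gcongr
  norm_num
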